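/- Consider signed distributions μ : ({−1,1})⁶ → ℝ on outcomes (a, b, c, a′, b′, c′) with Σ μ = 1 whose nine pairwise marginals onto the contexts (x, y′) with x ∈ {a,b,c}, y′ ∈ {a′,b′,c′} equal the Mermin-square tables: for the diagonal contexts (a,a′), (b,b′), (c,c′): unequal outcomes have probability 1/2 each and equal outcomes probability 0; for each of the six off-diagonal contexts: equal outcomes have probability 3/8 each and unequal outcomes 1/8 each. Then the minimum of Σ_{ω ∈ ({−1,1})⁶} |μ(ω)| over all such μ equals 5/4 (equivalently, the contextuality of the Mermin model equals 1/4). -/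

import Mathlib

/-!
The value `5/4` is attained by a signed distribution supported on the perfectly anticorrelated
outcomes `a' = -a`, `b' = -b`, `c' = -c`. The lower bound is weak LP duality: with
`S = a + b + c`, `T = a' + b' + c'` and `D = aa' + bb' + cc'`, the function
`f = (3ST - 5D)/12 = (∑_{x ≠ y} xy')/4 - D/6` satisfies `|f| ≤ 1` on `({-1,1})⁶`, and, being a
combination of context correlations, its `μ`-expectation is fixed by the marginals:
the diagonal correlations are `-1` and the off-diagonal ones `1/2`, giving
`6 · (1/2)/4 + 3/6 = 5/4`. Hence `5/4 = ∑ f μ ≤ ∑ |μ|`.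
-/

/-- The two-point outcome set `{-1, 1}`. -/
abbrev PM : Type := ({-1, 1} : Finset ℤ)

namespace PM

def minus : PM := ⟨-1, by decide⟩

def plus : PM := ⟨1, by decide⟩

theorem sum_eq {M : Type*} [AddCommMonoid M] (f : PM → M) :
    ∑ x : PM, f x = f minus + f plus := by
  rw [show (Finset.univ : Finset PM) = {minus, plus} by decide,
    Finset.sum_pair (by decide)]

def correlation (g : PM → PM → ℝ) : ℝ := ∑ x : PM, ∑ y : PM, ((x.1 * y.1 : ℤ) : ℝ) * g x y

theorem correlation_of_eq_ite {g : PM → PM → ℝ} {e u : ℝ}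
    (h : ∀ x y, g x y = if x = y then e else u) : correlation g = 2 * e - 2 * u := by
  simp only [correlation, sum_eq, h]
  norm_num [minus, plus]
  ring

end PM

theorem mul_le_abs_of_abs_le_one {c : ℝ} (hc : |c| ≤ 1) (x : ℝ) : c * x ≤ |x| :=
  calc c * x ≤ |c| * |x| := by rw [← abs_mul]; exact le_abs_self _
    _ ≤ |x| := mul_le_of_le_one_left (abs_nonneg x) hc

namespace Mermin

def dualWeight (a b c a' b' c' : PM) : ℤ :=
  3 * (a.1 + b.1 + c.1) * (a'.1 + b'.1 + c'.1) - 5 * (a.1 * a'.1 + b.1 * b'.1 + c.1 * c'.1)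

theorem abs_dualWeight_le (a b c a' b' c' : PM) : |dualWeight a b c a' b' c'| ≤ 12 := by
  revert a b c a' b' c'
  decide

noncomputable def dual (a b c a' b' c' : PM) : ℝ := dualWeight a b c a' b' c' / 12

theorem abs_dual_le_one (a b c a' b' c' : PM) : |dual a b c a' b' c'| ≤ 1 := by
  rw [dual, abs_div, abs_of_pos (by norm_num : (0 : ℝ) < 12), div_le_one (by norm_num)]
  exact_mod_cast abs_dualWeight_le a b c a' b' c'

/-- The mass of the witness at `(a, b, c, -a, -b, -c)`, as a function of `a + b + c`. -/
noncomputable def witnessMass (s : ℤ) : ℝ :=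
  if s = -3 then -1/8 else if s = -1 then 1/4 else if s = 1 then 1/8 else 0

noncomputable def witness (a b c a' b' c' : PM) : ℝ :=
  if a'.1 = -a.1 ∧ b'.1 = -b.1 ∧ c'.1 = -c.1 then witnessMass (a.1 + b.1 + c.1) else 0

end Mermin

open Mermin

/-- For the Mermin empirical model on outcomes `(a, b, c, a', b', c')` (diagonal contexts
`(a,a')`, `(b,b')`, `(c,c')`: unequal outcomes `1/2` each, equal `0`; the six
off-diagonal contexts: equal outcomes `3/8` each, unequal `1/8` each), the minimum of
`∑ |μ(ω)|` over all signed distributions `μ` on `({-1,1})⁶` with `∑ μ = 1` reproducing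
these nine pairwise marginals equals `5/4`, i.e. the contextuality of the model is `1/4`. -/
theorem stmt_11 :
    IsLeast {s : ℝ | ∃ μ : PM → PM → PM → PM → PM → PM → ℝ,
        (∑ a : PM, ∑ b : PM, ∑ c : PM, ∑ a' : PM, ∑ b' : PM, ∑ c' : PM,
            μ a b c a' b' c' = 1) ∧
        (∀ a a' : PM, ∑ b : PM, ∑ c : PM, ∑ b' : PM, ∑ c' : PM, μ a b c a' b' c'
            = if a = a' then 0 else 1/2) ∧
        (∀ a b' : PM, ∑ b : PM, ∑ c : PM, ∑ a' : PM, ∑ c' : PM, μ a b c a' b' c'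
            = if a = b' then 3/8 else 1/8) ∧
        (∀ a c' : PM, ∑ b : PM, ∑ c : PM, ∑ a' : PM, ∑ b' : PM, μ a b c a' b' c'
            = if a = c' then 3/8 else 1/8) ∧
        (∀ b a' : PM, ∑ a : PM, ∑ c : PM, ∑ b' : PM, ∑ c' : PM, μ a b c a' b' c'
            = if b = a' then 3/8 else 1/8) ∧
        (∀ b b' : PM, ∑ a : PM, ∑ c : PM, ∑ a' : PM, ∑ c' : PM, μ a b c a' b' c'
            = if b = b' then 0 else 1/2) ∧
        (∀ b c' : PM, ∑ a : PM, ∑ c : PM, ∑ a' : PM, ∑ b' : PM, μ a b c a' b' c'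
            = if b = c' then 3/8 else 1/8) ∧
        (∀ c a' : PM, ∑ a : PM, ∑ b : PM, ∑ b' : PM, ∑ c' : PM, μ a b c a' b' c'
            = if c = a' then 3/8 else 1/8) ∧
        (∀ c b' : PM, ∑ a : PM, ∑ b : PM, ∑ a' : PM, ∑ c' : PM, μ a b c a' b' c'
            = if c = b' then 3/8 else 1/8) ∧
        (∀ c c' : PM, ∑ a : PM, ∑ b : PM, ∑ a' : PM, ∑ b' : PM, μ a b c a' b' c'
            = if c = c' then 0 else 1/2) ∧
        s = ∑ a : PM, ∑ b : PM, ∑ c : PM, ∑ a' : PM, ∑ b' : PM, ∑ c' : PM,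
              |μ a b c a' b' c'|}
      (5/4) := by
  refine ⟨⟨witness, ?_⟩, ?_⟩
  · refine ⟨?_, ?_, ?_, ?_, ?_, ?_, ?_, ?_, ?_, ?_, ?_⟩ <;>
      simp only [PM.sum_eq] <;>
      norm_num [witness, witnessMass, PM.minus, PM.plus]
  · rintro s ⟨μ, -, hAA, hAB, hAC, hBA, hBB, hBC, hCA, hCB, hCC, rfl⟩
    have expectation_dual : ∑ a : PM, ∑ b : PM, ∑ c : PM, ∑ a' : PM, ∑ b' : PM, ∑ c' : PM,
        dual a b c a' b' c' * μ a b c a' b' c' = 5/4 := by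
      have cAA := PM.correlation_of_eq_ite hAA
      have cAB := PM.correlation_of_eq_ite hAB
      have cAC := PM.correlation_of_eq_ite hAC
      have cBA := PM.correlation_of_eq_ite hBA
      have cBB := PM.correlation_of_eq_ite hBB
      have cBC := PM.correlation_of_eq_ite hBC
      have cCA := PM.correlation_of_eq_ite hCA
      have cCB := PM.correlation_of_eq_ite hCB
      have cCC := PM.correlation_of_eq_ite hCC
      simp only [PM.correlation, PM.sum_eq] at cAA cAB cAC cBA cBB cBC cCA cCB cCC ⊢
      norm_num [dual, dualWeight, PM.minus, PM.plus] at cAA cAB cAC cBA cBB cBC cCA cCB cCC ⊢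
      linear_combination (cAB + cAC + cBA + cBC + cCA + cCB) / 4 - (cAA + cBB + cCC) / 6
    rw [← expectation_dual]
    gcongr with a _ b _ c _ a' _ b' _ c' _
    exact mul_le_abs_of_abs_le_one (abs_dual_le_one a b c a' b' c') _
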